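/- Let {A_i}_{i∈E} satisfy the Fano-non-Fano condition with abelian group labeling (𝒜, {θ_i}_{i∈E}), and let g : 𝒜 → 𝒜 be an endomorphism. Define U := θ_1(A_1) − g(θ_2(A_2)), V := θ_1(A_1) − g(θ_2(A_2)) − g(θ_3(A_3)), and W := θ_1(A_1) − g(θ_2(A_2)) + θ_3(A_3). Then the supports of U, V, W each have cardinality |𝒜|, and U ≐ A_1 | A_2, V ≐ A_1 | A_23, U ≐ V | A_3, W ≐ A_13 | A_2, and U ≐ W | A_3 hold. -/

import Mathlib

open scoped Classical

noncomputable section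

/-- The probability of the event `S` under the probability mass function `p`. -/
def Pr {Ω : Type} (p : Ω → ℝ) (S : Set Ω) : ℝ := ∑' ω : S, p ω

/-- `p` is a probability mass function on the sample space `Ω`. -/
def IsProb {Ω : Type} (p : Ω → ℝ) : Prop := (∀ ω, 0 ≤ p ω) ∧ Pr p Set.univ = 1

/-- The support of a random variable `X`: the set of values attained with positive
probability. -/
def supp {Ω α : Type} (p : Ω → ℝ) (X : Ω → α) : Set α := {a | 0 < Pr p {ω | X ω = a}}

/-- `X` is almost surely a function of `Y` (written `X ≤ι Y` in the paper). -/
def FuncOf {Ω α β : Type} (p : Ω → ℝ) (X : Ω → α) (Y : Ω → β) : Prop :=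
  ∃ f : β → α, Pr p {ω | X ω = f (Y ω)} = 1

/-- The random variables `X` and `Y` are independent. -/
def IndepRV {Ω α β : Type} (p : Ω → ℝ) (X : Ω → α) (Y : Ω → β) : Prop :=
  ∀ (a : α) (b : β), Pr p {ω | X ω = a ∧ Y ω = b} = Pr p {ω | X ω = a} * Pr p {ω | Y ω = b}

/-- The random variables `X`, `Y`, `Z` are mutually independent:
`X ⟂ Y` and `(X, Y) ⟂ Z`. -/
def Indep3 {Ω α β γ : Type} (p : Ω → ℝ) (X : Ω → α) (Y : Ω → β) (Z : Ω → γ) : Prop :=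
  IndepRV p X Y ∧ IndepRV p (fun ω => (X ω, Y ω)) Z

/-- The predicate `tri(X, Y, Z)`: each variable is a.s. a function of the other two, and the
three variables are pairwise independent. -/
def tri {Ω α β γ : Type} (p : Ω → ℝ) (X : Ω → α) (Y : Ω → β) (Z : Ω → γ) : Prop :=
  FuncOf p X (fun ω => (Y ω, Z ω)) ∧ FuncOf p Y (fun ω => (X ω, Z ω)) ∧
    FuncOf p Z (fun ω => (X ω, Y ω)) ∧
    IndepRV p X Y ∧ IndepRV p X Z ∧ IndepRV p Y Z

/- The ground set `E = {1,2,3,12,13,23,123}` is represented by `Fin 7`, where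
`0 ↦ 1`, `1 ↦ 2`, `2 ↦ 3`, `3 ↦ 12`, `4 ↦ 13`, `5 ↦ 23`, `6 ↦ 123`. -/

/-- `{i,j,k}` is one of the dependent 3-sets of the non-Fano matroid, i.e. one of
`{1,2,12}, {1,3,13}, {2,3,23}, {1,23,123}, {2,13,123}, {3,12,123}`. -/
def inDN (i j k : Fin 7) : Prop :=
  ({i, j, k} : Finset (Fin 7)) ∈
    ({{0, 1, 3}, {0, 2, 4}, {1, 2, 5}, {0, 5, 6}, {1, 4, 6}, {2, 3, 6}} :
      Finset (Finset (Fin 7)))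

/-- `{i,j,k}` is a dependent 3-set of the Fano matroid (`D_F = D_N ∪ {{12,13,23}}`). -/
def inDF (i j k : Fin 7) : Prop :=
  inDN i j k ∨ ({i, j, k} : Finset (Fin 7)) = {3, 4, 5}

/-- `{i,j,k}` is an independent 3-set of the Fano matroid: a 3-element subset of `E`
not in `D_F`. -/
def inIF (i j k : Fin 7) : Prop :=
  ({i, j, k} : Finset (Fin 7)).card = 3 ∧ ¬ inDF i j k

/-- The Fano-non-Fano condition on the seven random variables `A 0, …, A 6`
(representing `A_1, A_2, A_3, A_12, A_13, A_23, A_123`): `tri` holds for every triple in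
`D_N`, and mutual independence holds for every triple in `I_F`. -/
def fnf {Ω : Type} (p : Ω → ℝ) {α : Fin 7 → Type} (A : ∀ i, Ω → α i) : Prop :=
  (∀ i j k, inDN i j k → tri p (A i) (A j) (A k)) ∧
  (∀ i j k, inIF i j k → Indep3 p (A i) (A j) (A k))

/-- `(𝒜, θ)` is an abelian group labeling of `A 0, …, A 6`: `𝒜` is an abelian group,
each `θ i` is a bijection from the support of `A i` onto `𝒜`, and almost surely
`θ_12(A_12) = θ_1(A_1) + θ_2(A_2)`, `θ_13(A_13) = θ_1(A_1) + θ_3(A_3)`,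
`θ_23(A_23) = θ_2(A_2) + θ_3(A_3)`, `θ_123(A_123) = θ_1(A_1) + θ_2(A_2) + θ_3(A_3)`. -/
def IsAbelianLabeling {Ω : Type} (p : Ω → ℝ) {α : Fin 7 → Type} (A : ∀ i, Ω → α i)
    (𝒜 : Type) [AddCommGroup 𝒜] (θ : ∀ i, α i → 𝒜) : Prop :=
  (∀ i, Set.BijOn (θ i) (supp p (A i)) Set.univ) ∧
  Pr p {ω | θ 3 (A 3 ω) = θ 0 (A 0 ω) + θ 1 (A 1 ω)
      ∧ θ 4 (A 4 ω) = θ 0 (A 0 ω) + θ 2 (A 2 ω)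
      ∧ θ 5 (A 5 ω) = θ 1 (A 1 ω) + θ 2 (A 2 ω)
      ∧ θ 6 (A 6 ω) = θ 0 (A 0 ω) + θ 1 (A 1 ω) + θ 2 (A 2 ω)} = 1

/-- `X ≐ Y | Z`: given `Z`, the random variables `X` and `Y` carry the same information,
i.e. `X ≤ι (Z, Y)` and `Y ≤ι (Z, X)`. -/
def eqGiven {Ω α β γ : Type} (p : Ω → ℝ) (X : Ω → α) (Y : Ω → β) (Z : Ω → γ) : Prop :=
  FuncOf p X (fun ω => (Z ω, Y ω)) ∧ FuncOf p Y (fun ω => (Z ω, X ω))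

/-!
The three supports are full because `A_1, A_2, A_3` are mutually independent and `θ_1` maps
the support of `A_1` onto `𝒜`: every value of `U`, `V`, `W` is hit by some positive-probability
triple of values of `A_1, A_2, A_3`. The five relations `X ≐ Y | Z` all have the same shape:
almost surely `X = θ(Y) + f(Z)` with `θ` injective on the support of `Y`, so `X` is recovered
from `(Z, Y)` by adding `f(Z)`, and `Y` from `(Z, X)` by inverting `θ` on `X - f(Z)`. The
labeling equations and additivity of `g` put each of them into this shape.
-/

section Probability

variable {Ω : Type} {p : Ω → ℝ}

theorem IsProb.summable (hp : IsProb p) : Summable p := by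
  by_contra h
  have h1 := hp.2
  rw [Pr, tsum_univ, tsum_eq_zero_of_not_summable h] at h1
  exact zero_ne_one h1

theorem IsProb.nonempty (hp : IsProb p) : Nonempty Ω := by
  by_contra h
  have h1 := hp.2
  rw [not_nonempty_iff] at h
  rw [Pr, tsum_empty] at h1
  exact zero_ne_one h1

theorem IsProb.pr_mono (hp : IsProb p) {S T : Set Ω} (h : S ⊆ T) : Pr p S ≤ Pr p T := by
  simp only [Pr, tsum_subtype]
  exact (hp.summable.indicator S).tsum_le_tsum
    (Set.indicator_le_indicator_of_subset h hp.1) (hp.summable.indicator T)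

theorem IsProb.le_pr (hp : IsProb p) {S : Set Ω} {ω : Ω} (h : ω ∈ S) : p ω ≤ Pr p S :=
  calc p ω = Pr p {ω} := (tsum_singleton ω p).symm
    _ ≤ Pr p S := hp.pr_mono (Set.singleton_subset_iff.2 h)

theorem IsProb.pr_eq_one_iff (hp : IsProb p) {S : Set Ω} :
    Pr p S = 1 ↔ Function.support p ⊆ S := by
  constructor
  · intro hS ω hω
    by_contra hωS
    have htotal : Pr p S + Pr p Sᶜ = 1 := by
      rw [Pr, Pr, hp.summable.tsum_subtype_add_tsum_subtype_compl, ← tsum_univ]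
      exact hp.2
    have := hp.le_pr (Set.mem_compl hωS)
    exact hω (le_antisymm (by linarith) (hp.1 ω))
  · intro hS
    rw [← hp.2, Pr, Pr, tsum_subtype_eq_of_support_subset hS,
      tsum_subtype_eq_of_support_subset (Set.subset_univ _)]

theorem IsProb.pr_eq_one_of_subset (hp : IsProb p) {S T : Set Ω} (hS : Pr p S = 1)
    (h : S ⊆ T) : Pr p T = 1 :=
  hp.pr_eq_one_iff.2 ((hp.pr_eq_one_iff.1 hS).trans h)

theorem IsProb.pr_mem_supp (hp : IsProb p) {α : Type} (X : Ω → α) :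
    Pr p {ω | X ω ∈ supp p X} = 1 :=
  hp.pr_eq_one_iff.2 fun ω hω =>
    ((hp.1 ω).lt_of_ne' hω).trans_le (hp.le_pr (S := {ω' | X ω' = X ω}) rfl)

theorem Indep3.pr_eq_mul {α β γ : Type} {X : Ω → α} {Y : Ω → β} {Z : Ω → γ}
    (h : Indep3 p X Y Z) (a : α) (b : β) (c : γ) :
    Pr p {ω | X ω = a ∧ Y ω = b ∧ Z ω = c} =
      Pr p {ω | X ω = a} * Pr p {ω | Y ω = b} * Pr p {ω | Z ω = c} := by
  have h2 := h.2 (a, b) c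
  simp only [Prod.mk.injEq, and_assoc] at h2
  rw [h2, h.1 a b]

theorem IsProb.supp_eq_univ_of_indep3 (hp : IsProb p) {𝒜 α β γ : Type} [AddGroup 𝒜]
    {A : Ω → α} {B : Ω → β} {C : Ω → γ} (hABC : Indep3 p A B C) {θ : α → 𝒜}
    (hθ : Set.SurjOn θ (supp p A) Set.univ) (hB : (supp p B).Nonempty)
    (hC : (supp p C).Nonempty) (f : β → γ → 𝒜) {X : Ω → 𝒜}
    (hX : ∀ ω, X ω = θ (A ω) + f (B ω) (C ω)) : supp p X = Set.univ := by
  refine Set.eq_univ_of_forall fun u => ?_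
  obtain ⟨b, hb⟩ := hB
  obtain ⟨c, hc⟩ := hC
  obtain ⟨a, ha, hau⟩ := hθ (Set.mem_univ (u - f b c))
  have hsub : {ω | A ω = a ∧ B ω = b ∧ C ω = c} ⊆ {ω | X ω = u} := by
    rintro ω ⟨rfl, rfl, rfl⟩
    simp only [Set.mem_ofPred_eq, hX, hau, sub_add_cancel]
  have hpos : 0 < Pr p {ω | A ω = a ∧ B ω = b ∧ C ω = c} := by
    rw [hABC.pr_eq_mul]
    exact mul_pos (mul_pos ha hb) hc
  exact hpos.trans_le (hp.pr_mono hsub)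

theorem IsProb.eqGiven_of_pr_eq_add (hp : IsProb p) {𝒜 β γ : Type} [AddGroup 𝒜]
    {X : Ω → 𝒜} {Y : Ω → β} {Z : Ω → γ} {θ : β → 𝒜} (hθ : Set.InjOn θ (supp p Y))
    (f : γ → 𝒜) (h : Pr p {ω | X ω = θ (Y ω) + f (Z ω)} = 1) : eqGiven p X Y Z := by
  have : Nonempty β := hp.nonempty.map Y
  refine ⟨⟨fun zy => θ zy.2 + f zy.1, h⟩,
    ⟨fun zx => Function.invFunOn θ (supp p Y) (zx.2 - f zx.1), ?_⟩⟩
  rw [hp.pr_eq_one_iff] at h ⊢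
  intro ω hω
  have hY : Y ω ∈ supp p Y := hp.pr_eq_one_iff.1 (hp.pr_mem_supp Y) hω
  have hX : X ω = θ (Y ω) + f (Z ω) := h hω
  change Y ω = Function.invFunOn θ (supp p Y) (X ω - f (Z ω))
  rw [hX, add_sub_cancel_right, hθ.leftInvOn_invFunOn hY]

theorem IsProb.eqGiven_of_eq_add (hp : IsProb p) {𝒜 β γ : Type} [AddGroup 𝒜]
    {X : Ω → 𝒜} {Y : Ω → β} {Z : Ω → γ} {θ : β → 𝒜} (hθ : Set.InjOn θ (supp p Y))
    (f : γ → 𝒜) (h : ∀ ω, X ω = θ (Y ω) + f (Z ω)) : eqGiven p X Y Z :=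
  hp.eqGiven_of_pr_eq_add hθ f (hp.pr_eq_one_iff.2 fun ω _ => h ω)

end Probability

theorem end_to_fnf_general {Ω : Type} (p : Ω → ℝ) (hp : IsProb p)
    {α : Fin 7 → Type} (A : ∀ i, Ω → α i)
    (𝒜 : Type) [Fintype 𝒜] [AddCommGroup 𝒜] (θ : ∀ i, α i → 𝒜)
    (hfnf : fnf p A) (hlab : IsAbelianLabeling p A 𝒜 θ)
    (g : 𝒜 → 𝒜) (hg : ∀ a b : 𝒜, g (a + b) = g a + g b) :
    let U : Ω → 𝒜 := fun ω => θ 0 (A 0 ω) - g (θ 1 (A 1 ω))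
    let V : Ω → 𝒜 := fun ω => θ 0 (A 0 ω) - g (θ 1 (A 1 ω)) - g (θ 2 (A 2 ω))
    let W : Ω → 𝒜 := fun ω => θ 0 (A 0 ω) - g (θ 1 (A 1 ω)) + θ 2 (A 2 ω)
    ((supp p U).ncard = Fintype.card 𝒜 ∧
      (supp p V).ncard = Fintype.card 𝒜 ∧
      (supp p W).ncard = Fintype.card 𝒜) ∧
    eqGiven p U (A 0) (A 1) ∧
    eqGiven p V (A 0) (A 5) ∧
    eqGiven p U V (A 2) ∧
    eqGiven p W (A 4) (A 1) ∧
    eqGiven p U W (A 2) := by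
  intro U V W
  obtain ⟨hbij, hlab⟩ := hlab
  have hne : ∀ i, (supp p (A i)).Nonempty := fun i =>
    ((hbij i).surjOn (Set.mem_univ 0)).imp fun _ h => h.1
  have hind : Indep3 p (A 0) (A 1) (A 2) := hfnf.2 0 1 2 (by unfold inIF inDF inDN; decide)
  have hcard : ∀ (f : α 1 → α 2 → 𝒜) (X : Ω → 𝒜),
      (∀ ω, X ω = θ 0 (A 0 ω) + f (A 1 ω) (A 2 ω)) → (supp p X).ncard = Fintype.card 𝒜 :=
    fun f X hX => by
      rw [hp.supp_eq_univ_of_indep3 hind (hbij 0).surjOn (hne 1) (hne 2) f hX,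
        Set.ncard_univ, Nat.card_eq_fintype_card]
  refine ⟨⟨?_, ?_, ?_⟩, ?_, ?_, ?_, ?_, ?_⟩
  · exact hcard (fun b _ => -g (θ 1 b)) U fun ω => sub_eq_add_neg _ _
  · exact hcard (fun b c => -g (θ 1 b) - g (θ 2 c)) V fun ω => by simp only [V]; abel
  · exact hcard (fun b c => -g (θ 1 b) + θ 2 c) W fun ω => by simp only [W]; abel
  · exact hp.eqGiven_of_eq_add (hbij 0).injOn (fun b => -g (θ 1 b)) fun ω => sub_eq_add_neg _ _
  · refine hp.eqGiven_of_pr_eq_add (hbij 0).injOn (fun a => -g (θ 5 a))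
      (hp.pr_eq_one_of_subset hlab ?_)
    rintro ω ⟨-, -, h5, -⟩
    simp only [Set.mem_ofPred_eq, V, h5, hg]
    abel
  · exact hp.eqGiven_of_eq_add (Set.injOn_id _) (fun c => g (θ 2 c)) fun ω => by
      simp only [U, V, id]; abel
  · refine hp.eqGiven_of_pr_eq_add (hbij 4).injOn (fun b => -g (θ 1 b))
      (hp.pr_eq_one_of_subset hlab ?_)
    rintro ω ⟨-, h4, -, -⟩
    simp only [Set.mem_ofPred_eq, W, h4]
    abel
  · exact hp.eqGiven_of_eq_add (Set.injOn_id _) (fun c => -θ 2 c) fun ω => by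
      simp only [U, W, id]; abel

/-- Proposition `end_to_fnf`: given `{A_i}_{i∈E}` satisfying the
Fano-non-Fano condition with abelian group labeling `(𝒜, {θ_i})` and an endomorphism
`g : 𝒜 → 𝒜`, the random variables `U := θ_1(A_1) − g(θ_2(A_2))`,
`V := θ_1(A_1) − g(θ_2(A_2)) − g(θ_3(A_3))`, `W := θ_1(A_1) − g(θ_2(A_2)) + θ_3(A_3)`
have supports of cardinality `|𝒜|` and satisfy `U ≐ A_1 | A_2`, `V ≐ A_1 | A_23`,
`U ≐ V | A_3`, `W ≐ A_13 | A_2`, `U ≐ W | A_3`. -/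
theorem end_to_fnf {Ω : Type} (p : Ω → ℝ) (hp : IsProb p)
    {α : Fin 7 → Type} (A : ∀ i, Ω → α i) (hfin : ∀ i, (supp p (A i)).Finite)
    (𝒜 : Type) [Fintype 𝒜] [AddCommGroup 𝒜] (θ : ∀ i, α i → 𝒜)
    (hfnf : fnf p A) (hlab : IsAbelianLabeling p A 𝒜 θ)
    (g : 𝒜 → 𝒜) (hg : ∀ a b : 𝒜, g (a + b) = g a + g b) :
    let U : Ω → 𝒜 := fun ω => θ 0 (A 0 ω) - g (θ 1 (A 1 ω))
    let V : Ω → 𝒜 := fun ω => θ 0 (A 0 ω) - g (θ 1 (A 1 ω)) - g (θ 2 (A 2 ω))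
    let W : Ω → 𝒜 := fun ω => θ 0 (A 0 ω) - g (θ 1 (A 1 ω)) + θ 2 (A 2 ω)
    ((supp p U).ncard = Fintype.card 𝒜 ∧
      (supp p V).ncard = Fintype.card 𝒜 ∧
      (supp p W).ncard = Fintype.card 𝒜) ∧
    eqGiven p U (A 0) (A 1) ∧
    eqGiven p V (A 0) (A 5) ∧
    eqGiven p U V (A 2) ∧
    eqGiven p W (A 4) (A 1) ∧
    eqGiven p U W (A 2) :=
  end_to_fnf_general p hp A 𝒜 θ hfnf hlab g hg
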